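/- arXiv:2009.04322 — 2 statements merged into one kernel-verified Lean document; each statement's English description precedes it below -/
import Mathlib

section
/- Let A ⊆ F_p with density α and let r ≠ 0 with Â(r) = δα·e^{iθ}. Then Â(2r) + Â(-2r) = 2Re Â(2r) ≥ 2α(2δ²cos²θ − 1). -/
open Finset

/-- The Fourier coefficient of the indicator function of `A` at `r`. -/
noncomputable def ft {p : ℕ} [NeZero p] (A : Finset (ZMod p)) (r : ZMod p) : ℂ :=
  (p : ℂ)⁻¹ * ∑ x : ZMod p,
    if x ∈ A then Complex.exp (-(2 * Real.pi * Complex.I * ((r * x).val : ℕ) / p)) else 0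

noncomputable def Ff (p : ℕ) [NeZero p] (v : ZMod p) : ℂ :=
  Complex.exp (-(2 * Real.pi * Complex.I * (v.val : ℕ) / p))

lemma ft_sum {p : ℕ} [NeZero p] (A : Finset (ZMod p)) (s : ZMod p) :
    ft A s = (p : ℂ)⁻¹ * ∑ x ∈ A, Ff p (s * x) := by
  rw [ft]
  congr 1
  rw [Finset.sum_ite_mem, Finset.univ_inter]
  rfl

lemma Ff_conj {p : ℕ} [NeZero p] (v : ZMod p) :
    (starRingEnd ℂ) (Ff p v) = Ff p (-v) := by
  have hp : (p : ℂ) ≠ 0 := Nat.cast_ne_zero.mpr (NeZero.ne p)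
  by_cases hv : v = 0
  · simp [hv, Ff]
  · rw [Ff, ← Complex.exp_conj, Ff, ZMod.neg_val, if_neg hv]
    have hle : v.val ≤ p := le_of_lt (ZMod.val_lt v)
    rw [Nat.cast_sub hle]
    have : -(2 * ↑Real.pi * Complex.I * (((p : ℕ) : ℂ) - ↑v.val) / ↑p)
        = (starRingEnd ℂ) (-(2 * ↑Real.pi * Complex.I * ↑v.val / ↑p)) + -(2 * Real.pi * Complex.I) := by
      simp only [map_neg, map_div₀, map_mul, Complex.conj_I, Complex.conj_ofNat,
        Complex.conj_ofReal, Complex.conj_natCast]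
      field_simp
      ring
    rw [this, Complex.exp_add, Complex.exp_neg, Complex.exp_two_pi_mul_I]
    simp

lemma Ff_re {p : ℕ} [NeZero p] (v : ZMod p) :
    (Ff p v).re = Real.cos (2 * Real.pi * v.val / p) := by
  have : -(2 * ↑Real.pi * Complex.I * ((v.val : ℕ) : ℂ) / ↑p)
      = ((-(2 * Real.pi * v.val / p) : ℝ) : ℂ) * Complex.I := by
    push_cast; ring
  rw [Ff, this, Complex.exp_ofReal_mul_I_re, Real.cos_neg]

lemma Ff_two_re {p : ℕ} [NeZero p] (v : ZMod p) :
    (Ff p (2 * v)).re = 2 * (Ff p v).re ^ 2 - 1 := by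
  have hp : (0 : ℝ) < p := Nat.cast_pos.mpr (Nat.pos_of_ne_zero (NeZero.ne p))
  rw [Ff_re, Ff_re]
  have hval : (2 * v).val = (2 * v.val) % p := by
    rw [two_mul, ZMod.val_add, two_mul]
  set q := 2 * v.val / p with hq
  have hnm : (2 * v.val : ℝ) = p * q + ((2 * v.val) % p : ℕ) := by
    exact_mod_cast (Nat.div_add_mod (2 * v.val) p).symm
  have hm : ((2 * v.val % p : ℕ) : ℝ) = 2 * (v.val : ℝ) - (p : ℝ) * q := by
    linarith [hnm]
  have key : 2 * Real.pi * ((2 * v).val : ℕ) / p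
      = 2 * (2 * Real.pi * v.val / p) - ((q : ℤ) : ℝ) * (2 * Real.pi) := by
    rw [hval, hm, Int.cast_natCast]
    field_simp
  rw [key, Real.cos_sub_int_mul_two_pi, ← Real.cos_two_mul]

lemma ft_re {p : ℕ} [NeZero p] (A : Finset (ZMod p)) (s : ZMod p) :
    (ft A s).re = (p : ℝ)⁻¹ * ∑ x ∈ A, (Ff p (s * x)).re := by
  rw [ft_sum]
  have : ((p : ℂ))⁻¹ = (((p : ℝ)⁻¹ : ℝ) : ℂ) := by push_cast; rfl
  rw [this, Complex.re_ofReal_mul, Complex.re_sum]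

lemma ft_neg {p : ℕ} [NeZero p] (A : Finset (ZMod p)) (s : ZMod p) :
    ft A (-s) = (starRingEnd ℂ) (ft A s) := by
  rw [ft_sum, ft_sum, map_mul, map_sum]
  simp only [Ff_conj, neg_mul]
  congr 1
  simp

theorem stmt8 {p : ℕ} [Fact p.Prime] (hodd : Odd p) (A : Finset (ZMod p))
    (α δ θ : ℝ) (hα : α = (A.card : ℝ) / p) (hδ : 0 ≤ δ)
    (r : ZMod p) (hr : r ≠ 0)
    (hft : ft A r = ((δ * α : ℝ) : ℂ) * Complex.exp (θ * Complex.I)) :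
    ft A (2 * r) + ft A (-(2 * r)) = ((2 * (ft A (2 * r)).re : ℝ) : ℂ) ∧
    2 * (ft A (2 * r)).re ≥ 2 * α * (2 * δ ^ 2 * Real.cos θ ^ 2 - 1) := by
  have hp : (0 : ℝ) < p := Nat.cast_pos.mpr (Nat.pos_of_ne_zero (NeZero.ne p))
  constructor
  · rw [ft_neg, Complex.add_conj]
  · -- real part computations
    set c : ZMod p → ℝ := fun x => (Ff p (r * x)).re with hc
    have hre1 : (ft A r).re = δ * α * Real.cos θ := by
      rw [hft]
      have : Complex.exp (↑θ * Complex.I) = Complex.exp ((θ : ℝ) * Complex.I) := rfl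
      rw [Complex.re_ofReal_mul, this, Complex.exp_ofReal_mul_I_re]
    have hS : ∑ x ∈ A, c x = p * (δ * α * Real.cos θ) := by
      have := ft_re A r
      rw [hre1] at this
      have hp' : (p : ℝ) ≠ 0 := ne_of_gt hp
      field_simp at this ⊢
      linarith [this]
    have hCS : (∑ x ∈ A, c x) ^ 2 ≤ (A.card : ℝ) * ∑ x ∈ A, c x ^ 2 := by
      exact_mod_cast sq_sum_le_card_mul_sum_sq (s := A) (f := c)
    have hre2 : (ft A (2 * r)).re = (p : ℝ)⁻¹ * (2 * (∑ x ∈ A, c x ^ 2) - A.card) := by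
      rw [ft_re]
      congr 1
      have : ∀ x ∈ A, (Ff p (2 * r * x)).re = 2 * c x ^ 2 - 1 := by
        intro x _
        rw [mul_assoc, Ff_two_re]
      rw [Finset.sum_congr rfl this, Finset.sum_sub_distrib, ← Finset.mul_sum]
      simp
    rcases eq_or_lt_of_le (Nat.zero_le A.card) with hA | hA
    · have hA' : A = ∅ := Finset.card_eq_zero.mp hA.symm
      have hα0 : α = 0 := by simp [hα, hA']
      rw [hre2, hA', hα0]
      simp
    · have hcard : (0 : ℝ) < A.card := by exact_mod_cast hA
      have hcd : α * p = A.card := by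
        rw [hα]; field_simp
      set T := ∑ x ∈ A, c x ^ 2 with hT
      have hαp : (0 : ℝ) < α * p := by rw [hcd]; exact hcard
      have hCS' : (p : ℝ) ^ 2 * (δ * α * Real.cos θ) ^ 2 ≤ α * p * T := by
        rw [hcd]
        calc (p : ℝ) ^ 2 * (δ * α * Real.cos θ) ^ 2
            = ((p : ℝ) * (δ * α * Real.cos θ)) ^ 2 := by ring
          _ = (∑ x ∈ A, c x) ^ 2 := by rw [hS]
          _ ≤ (A.card : ℝ) * T := hCS
      have key : p * (α * (2 * δ ^ 2 * Real.cos θ ^ 2 - 1)) ≤ 2 * T - A.card := by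
        rw [← hcd]
        nlinarith [hCS', hαp]
      rw [hre2, ge_iff_le]
      have h3 : (p : ℝ)⁻¹ * ((p : ℝ) * (α * (2 * δ ^ 2 * Real.cos θ ^ 2 - 1)))
          = α * (2 * δ ^ 2 * Real.cos θ ^ 2 - 1) := inv_mul_cancel_left₀ (ne_of_gt hp) _
      have h4 := mul_le_mul_of_nonneg_left key (le_of_lt (inv_pos.mpr hp))
      rw [h3] at h4
      linarith
end

section
/- (Yudin's inequality) Let A ⊆ F_p, r ≠ 0, and |Â(r)| = δα where α = |A|/p > 0. Then |Â(2r)| ≥ (2δ² − 1)α. -/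
/-!
Rotate the unit vectors `z x = e(-r x)`, `x ∈ A`, so that their sum becomes the positive
real number `p ‖Â(r)‖`. Cauchy–Schwarz bounds the square of this sum of real parts by `|A|`
times the sum of their squares, and `cos² θ = (1 + cos 2θ) / 2` turns the latter into `|A|`
plus the real part of a sum of `z x ^ 2 = e(-2 r x)`, which is at most `p ‖Â(2r)‖`.
-/

open Finset

lemma sq_re_eq_of_norm_eq_one {w : ℂ} (hw : ‖w‖ = 1) : w.re ^ 2 = (1 + (w ^ 2).re) / 2 := by
  have h := Complex.sq_norm w
  rw [hw, Complex.normSq_apply] at h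
  rw [pow_two w, Complex.mul_re]
  linarith

lemma two_mul_sq_sum_re_le {ι : Type*} (s : Finset ι) (w : ι → ℂ)
    (hw : ∀ i ∈ s, ‖w i‖ = 1) :
    2 * (∑ i ∈ s, (w i).re) ^ 2 ≤ #s ^ 2 + #s * ‖∑ i ∈ s, w i ^ 2‖ := by
  have hsum_sq : ∑ i ∈ s, (w i).re ^ 2 = (#s + (∑ i ∈ s, w i ^ 2).re) / 2 := by
    rw [sum_congr rfl fun i hi => sq_re_eq_of_norm_eq_one (hw i hi), ← sum_div,
      sum_add_distrib, Complex.re_sum, sum_const, nsmul_one]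
  calc 2 * (∑ i ∈ s, (w i).re) ^ 2 ≤ 2 * (#s * ∑ i ∈ s, (w i).re ^ 2) := by
        gcongr; exact sq_sum_le_card_mul_sum_sq
    _ = #s ^ 2 + #s * (∑ i ∈ s, w i ^ 2).re := by rw [hsum_sq]; ring
    _ ≤ #s ^ 2 + #s * ‖∑ i ∈ s, w i ^ 2‖ := by gcongr; exact Complex.re_le_norm _

theorem two_mul_norm_sum_sq_le {ι : Type*} (s : Finset ι) (z : ι → ℂ)
    (hz : ∀ i ∈ s, ‖z i‖ = 1) :
    2 * ‖∑ i ∈ s, z i‖ ^ 2 ≤ #s ^ 2 + #s * ‖∑ i ∈ s, z i ^ 2‖ := by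
  set S := ∑ i ∈ s, z i
  set u := Complex.exp (-(S.arg * Complex.I))
  have hu : ‖u‖ = 1 := by
    rw [Complex.norm_exp, Complex.neg_re, Complex.re_ofReal_mul, Complex.I_re, mul_zero,
      neg_zero, Real.exp_zero]
  have huS : u * S = ‖S‖ := by
    conv_lhs => rw [← Complex.norm_mul_exp_arg_mul_I S]
    rw [mul_left_comm, ← Complex.exp_add, neg_add_cancel, Complex.exp_zero, mul_one]
  have h := two_mul_sq_sum_re_le s (fun i => u * z i)
    fun i hi => by rw [norm_mul, hu, hz i hi, one_mul]
  have hre : ∑ i ∈ s, (u * z i).re = ‖S‖ := by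
    rw [← Complex.re_sum, ← mul_sum, huS, Complex.ofReal_re]
  have hnorm : ‖∑ i ∈ s, (u * z i) ^ 2‖ = ‖∑ i ∈ s, z i ^ 2‖ := by
    simp_rw [mul_pow, ← mul_sum, norm_mul, norm_pow, hu, one_pow, one_mul]
  rwa [hre, hnorm] at h

lemma ft_eq_sum_stdAddChar {p : ℕ} [NeZero p] (A : Finset (ZMod p)) (r : ZMod p) :
    ft A r = (p : ℂ)⁻¹ * ∑ x ∈ A, ZMod.stdAddChar (-(r * x)) := by
  rw [ft, ← sum_filter, filter_mem_eq_inter, univ_inter]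
  congr 1
  refine sum_congr rfl fun x _ => ?_
  rw [AddChar.map_neg_eq_inv, ZMod.stdAddChar_apply, ZMod.toCircle_apply, ← Complex.exp_neg]

lemma two_mul_norm_ft_sq_le {p : ℕ} [NeZero p] (A : Finset (ZMod p)) (r : ZMod p) :
    2 * ‖ft A r‖ ^ 2 ≤ (#A / p : ℝ) ^ 2 + #A / p * ‖ft A (2 * r)‖ := by
  have hdouble : ∀ x, ZMod.stdAddChar (-(2 * r * x)) = ZMod.stdAddChar (-(r * x)) ^ 2 := by
    intro x
    rw [← AddChar.map_nsmul_eq_pow, two_nsmul]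
    ring_nf
  have h := two_mul_norm_sum_sq_le A (fun x => ZMod.stdAddChar (-(r * x)))
    fun x _ => AddChar.norm_apply _ _
  simp only [ft_eq_sum_stdAddChar, hdouble, norm_mul, norm_inv, Complex.norm_natCast]
  have hp : (0 : ℝ) ≤ (p : ℝ)⁻¹ ^ 2 := by positivity
  linear_combination mul_le_mul_of_nonneg_left h hp

theorem stmt9_general {p : ℕ} [Fact p.Prime] (A : Finset (ZMod p))
    (α δ : ℝ) (hα : α = (A.card : ℝ) / p) (hαpos : 0 < α)
    (r : ZMod p)
    (hδ : ‖ft A r‖ = δ * α) :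
    (2 * δ ^ 2 - 1) * α ≤ ‖ft A (2 * r)‖ := by
  have h := two_mul_norm_ft_sq_le A r
  rw [hδ, ← hα] at h
  refine le_of_mul_le_mul_left ?_ hαpos
  linear_combination h

theorem stmt9 {p : ℕ} [Fact p.Prime] (hodd : Odd p) (A : Finset (ZMod p))
    (α δ : ℝ) (hα : α = (A.card : ℝ) / p) (hαpos : 0 < α)
    (r : ZMod p) (hr : r ≠ 0)
    (hδ : ‖ft A r‖ = δ * α) :
    (2 * δ ^ 2 - 1) * α ≤ ‖ft A (2 * r)‖ :=
  stmt9_general A α δ hα hαpos r hδ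
end
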